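/- Let δ be a real number, let ρ̃ be the 3×3 complex matrix [[1/4, δ, 0],[δ, 1/2, δ],[0, δ, 1/4]], and let τ be a 3×3 real symmetric matrix satisfying τ₁₁ = τ₃₃ and τ₁₂ = τ₂₃. On ℂ³⊗ℂ³ (basis |ab⟩ with a,b ∈ {1,2,3}, first factor S, second factor C) let K₀ = Σ_{i=1}^{3} |ii⟩⟨ii| + Σ_{(i,j)∈{(1,2),(2,3),(1,3)}} |e⁺_{ij}⟩⟨e⁺_{ij}| where |e⁺_{ij}⟩ = (|ij⟩+|ji⟩)/√2, and set σ₀ = K₀ (ρ̃⊗τ) K₀ᴴ. Then the partial trace of σ₀ over the first factor S satisfies: (Tr_S σ₀)₁₁ = (1/2)τ₁₁ + (1/16)τ₂₂ + (δ/2)τ₁₂; (Tr_S σ₀)₂₂ = (1/4)τ₁₁ + (5/8)τ₂₂ + δτ₁₂; (Tr_S σ₀)₁₂ = (7/16)τ₁₂ + (3δ/4)τ₁₁ + (δ/2)τ₂₂ + (δ/4)τ₁₃; (Tr_S σ₀)₁₃ = (3/8)τ₁₃ + (δ/2)τ₁₂. -/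

import Mathlib

open Matrix Kronecker

/-- The basis state `|ab⟩` of `ℂ³ ⊗ ℂ³`. -/
def ket (a b : Fin 3) : Fin 3 × Fin 3 → ℂ := fun p => if p = (a, b) then 1 else 0

/-- The symmetric maximally entangled state `|e⁺_{ij}⟩ = (|ij⟩ + |ji⟩)/√2`. -/
noncomputable def eplus (i j : Fin 3) : Fin 3 × Fin 3 → ℂ :=
  fun p => (ket i j p + ket j i p) / Real.sqrt 2

/-- The projection `K₀` onto the span of `|ii⟩` and `|e⁺_{ij}⟩`. -/
noncomputable def Kproj : Matrix (Fin 3 × Fin 3) (Fin 3 × Fin 3) ℂ :=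
  (∑ i : Fin 3, Matrix.vecMulVec (ket i i) (star (ket i i)))
    + Matrix.vecMulVec (eplus 0 1) (star (eplus 0 1))
    + Matrix.vecMulVec (eplus 1 2) (star (eplus 1 2))
    + Matrix.vecMulVec (eplus 0 2) (star (eplus 0 2))

noncomputable def rhoTilde (δ : ℝ) : Matrix (Fin 3) (Fin 3) ℂ :=
  !![1 / 4, δ, 0; δ, 1 / 2, δ; 0, δ, 1 / 4]

/-- Partial trace over the first tensor factor (system `S`). -/
noncomputable def ptrFirst (M : Matrix (Fin 3 × Fin 3) (Fin 3 × Fin 3) ℂ) :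
    Matrix (Fin 3) (Fin 3) ℂ :=
  Matrix.of fun a b => ∑ c : Fin 3, M (c, a) (c, b)

/-!
The span of the states `|ii⟩` and `|e⁺_{ij}⟩` is the symmetric subspace of `ℂ³ ⊗ ℂ³`, so `K₀` is
the symmetrizer `(1 + F) / 2`, where `F` is the swap `|ab⟩ ↦ |ba⟩`. Multiplying `A ⊗ B` by `F` on
the left, the right or both sides and tracing out the first factor gives `A B`, `B A` and
`tr B • A` respectively, so `Tr_S σ₀ = (τ + tr τ • ρ̃ + ρ̃ τ + τ ρ̃) / 4` because `tr ρ̃ = 1`. The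
four entries are read off from this, using the symmetry of `τ`, `τ₁₁ = τ₃₃` and `τ₁₂ = τ₂₃`.
-/

namespace Matrix

variable {n m R : Type*} [Fintype n]

def traceFst [AddCommMonoid R] (M : Matrix (n × m) (n × m) R) : Matrix m m R :=
  of fun a b => ∑ c, M (c, a) (c, b)

def swapMatrix (n R : Type*) [DecidableEq n] [Zero R] [One R] : Matrix (n × n) (n × n) R :=
  (Equiv.prodComm n n).toPEquiv.toMatrix

def symmetrizer (n R : Type*) [DecidableEq n] [DivisionRing R] : Matrix (n × n) (n × n) R :=
  (2⁻¹ : R) • (1 + swapMatrix n R)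

section CommSemiring

variable [CommSemiring R]

theorem traceFst_add (M N : Matrix (n × m) (n × m) R) :
    traceFst (M + N) = traceFst M + traceFst N := by
  ext; simp [traceFst, Finset.sum_add_distrib]

theorem traceFst_smul (r : R) (M : Matrix (n × m) (n × m) R) :
    traceFst (r • M) = r • traceFst M := by
  ext; simp [traceFst, Finset.mul_sum]

section Kronecker

variable (A B : Matrix n n R)

theorem traceFst_kronecker : traceFst (A ⊗ₖ B) = A.trace • B := by
  ext; simp [traceFst, trace, Finset.sum_mul]

theorem traceFst_kronecker_submatrix_swap_id :
    traceFst ((A ⊗ₖ B).submatrix Prod.swap id) = A * B := by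
  ext; simp [traceFst, mul_apply]

theorem traceFst_kronecker_submatrix_id_swap :
    traceFst ((A ⊗ₖ B).submatrix id Prod.swap) = B * A := by
  ext; simp [traceFst, mul_apply, mul_comm]

theorem traceFst_kronecker_submatrix_swap_swap :
    traceFst ((A ⊗ₖ B).submatrix Prod.swap Prod.swap) = B.trace • A := by
  ext; simp [traceFst, trace, Finset.mul_sum, mul_comm]

end Kronecker

variable [DecidableEq n]

theorem swapMatrix_mul (M : Matrix (n × n) (n × n) R) :
    swapMatrix n R * M = M.submatrix Prod.swap id :=
  PEquiv.toMatrix_toPEquiv_mul _ M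

theorem mul_swapMatrix (M : Matrix (n × n) (n × n) R) :
    M * swapMatrix n R = M.submatrix id Prod.swap :=
  PEquiv.mul_toMatrix_toPEquiv M _

theorem traceFst_one_add_swapMatrix_mul_kronecker_mul (A B : Matrix n n R) :
    traceFst ((1 + swapMatrix n R) * (A ⊗ₖ B) * (1 + swapMatrix n R))
      = A.trace • B + B.trace • A + A * B + B * A := by
  simp only [add_mul, mul_add, one_mul, mul_one, swapMatrix_mul, mul_swapMatrix,
    submatrix_submatrix, Function.comp_id, Function.id_comp, traceFst_add, traceFst_kronecker,
    traceFst_kronecker_submatrix_swap_id, traceFst_kronecker_submatrix_id_swap,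
    traceFst_kronecker_submatrix_swap_swap]
  abel

end CommSemiring

theorem traceFst_symmetrizer_mul_kronecker_mul_symmetrizer [Field R] [DecidableEq n]
    (A B : Matrix n n R) :
    traceFst (symmetrizer n R * (A ⊗ₖ B) * symmetrizer n R)
      = (4⁻¹ : R) • (A.trace • B + B.trace • A + A * B + B * A) := by
  rw [symmetrizer, Matrix.smul_mul, Matrix.smul_mul, Matrix.mul_smul, smul_smul, traceFst_smul,
    traceFst_one_add_swapMatrix_mul_kronecker_mul, ← mul_inv, two_mul, two_add_two_eq_four]

end Matrix

open Matrix

theorem ptrFirst_eq_traceFst : ptrFirst = traceFst := rfl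

theorem vecMulVec_eplus_star_apply (i j : Fin 3) (p q : Fin 3 × Fin 3) :
    vecMulVec (eplus i j) (star (eplus i j)) p q
      = (ket i j p + ket j i p) * (ket i j q + ket j i q) / 2 := by
  have hket : ∀ a b r, star (ket a b r) = ket a b r := fun a b r => by
    unfold ket; split_ifs <;> simp
  have hsqrt : ((Real.sqrt 2 : ℝ) : ℂ) * (Real.sqrt 2 : ℝ) = 2 := by
    rw [← Complex.ofReal_mul, Real.mul_self_sqrt zero_le_two, Complex.ofReal_ofNat]
  simp only [vecMulVec_apply, Pi.star_apply, eplus, star_div₀, star_add, hket,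
    Complex.star_def, Complex.conj_ofReal]
  rw [div_mul_div_comm, hsqrt]

theorem Kproj_eq_symmetrizer : Kproj = symmetrizer (Fin 3) ℂ := by
  ext ⟨a, b⟩ ⟨c, d⟩
  simp only [Kproj, Matrix.add_apply, Matrix.sum_apply, vecMulVec_eplus_star_apply]
  simp only [vecMulVec_apply, Fin.sum_univ_three]
  fin_cases a <;> fin_cases b <;> fin_cases c <;> fin_cases d <;>
    simp [ket, symmetrizer, swapMatrix, PEquiv.toMatrix_apply, one_apply] <;> norm_num

theorem Kproj_conjTranspose : Kprojᴴ = Kproj := by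
  simp [Kproj, conjTranspose_sum]

theorem trace_rhoTilde (δ : ℝ) : (rhoTilde δ).trace = 1 := by
  simp [trace_fin_three, rhoTilde]
  norm_num

theorem three_level_catalyst_marginal_entries (δ : ℝ) (τ : Matrix (Fin 3) (Fin 3) ℝ)
    (hsymm : τ.IsSymm) (h11 : τ 0 0 = τ 2 2) (h12 : τ 0 1 = τ 1 2) :
    ptrFirst (Kproj * (rhoTilde δ ⊗ₖ τ.map Complex.ofReal) * Kprojᴴ) 0 0
        = (1 / 2 : ℂ) * τ 0 0 + (1 / 16 : ℂ) * τ 1 1 + (δ / 2 : ℂ) * τ 0 1 ∧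
    ptrFirst (Kproj * (rhoTilde δ ⊗ₖ τ.map Complex.ofReal) * Kprojᴴ) 1 1
        = (1 / 4 : ℂ) * τ 0 0 + (5 / 8 : ℂ) * τ 1 1 + (δ : ℂ) * τ 0 1 ∧
    ptrFirst (Kproj * (rhoTilde δ ⊗ₖ τ.map Complex.ofReal) * Kprojᴴ) 0 1
        = (7 / 16 : ℂ) * τ 0 1 + (3 * δ / 4 : ℂ) * τ 0 0 + (δ / 2 : ℂ) * τ 1 1
            + (δ / 4 : ℂ) * τ 0 2 ∧
    ptrFirst (Kproj * (rhoTilde δ ⊗ₖ τ.map Complex.ofReal) * Kprojᴴ) 0 2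
        = (3 / 8 : ℂ) * τ 0 2 + (δ / 2 : ℂ) * τ 0 1 := by
  set τ' := τ.map Complex.ofReal
  have hmarg : ptrFirst (Kproj * (rhoTilde δ ⊗ₖ τ') * Kprojᴴ)
      = (4⁻¹ : ℂ) • (τ' + τ'.trace • rhoTilde δ + rhoTilde δ * τ' + τ' * rhoTilde δ) := by
    rw [ptrFirst_eq_traceFst, Kproj_conjTranspose, Kproj_eq_symmetrizer,
      traceFst_symmetrizer_mul_kronecker_mul_symmetrizer, trace_rhoTilde, one_smul]
  have h10 : τ 1 0 = τ 0 1 := hsymm.apply 0 1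
  have h20 : τ 2 0 = τ 0 2 := hsymm.apply 0 2
  have h21 : τ 2 1 = τ 1 2 := hsymm.apply 1 2
  rw [hmarg]
  refine ⟨?_, ?_, ?_, ?_⟩ <;>
    simp only [Matrix.smul_apply, Matrix.add_apply, mul_apply, Fin.sum_univ_three, trace_fin_three,
      smul_eq_mul, τ', map_apply, rhoTilde, of_apply, cons_val', cons_val_zero, cons_val_one,
      cons_val, h10, h20, h21, ← h11, ← h12] <;> ring
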